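/- arXiv:2412.09953 — 2 statements merged into one kernel-verified Lean document; each statement's English description precedes it below -/
import Mathlib

section
/- For all real numbers λ > 0 and 0 < V_o < V, the quantity 2·η(V), where η(V) := (V_o·exp(−λ·V) − V·exp(−λ·V_o) + V − V_o) / (λ²·(V − V_o)·V·V_o), satisfies 0 < 2·η(V) < 1. -/
/-!
With `a = λ V_o < b = λ V` and `φ x = (1 - e^{-x}) / x`, the mean of `e^{-t}` over `[0, x]`,
one has `2 η(V) = 2 (φ a - φ b) / (b - a)`. So `0 < 2 η(V)` because `φ` is strictly
decreasing on `(0, ∞)`, and `2 η(V) < 1` because `φ x + x / 2` is strictly increasing there: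
`φ' x = ((1 + x) e^{-x} - 1) / x²` lies strictly between `-1/2` and `0`.
-/

open Real Set

noncomputable def expNegMean (x : ℝ) : ℝ := (1 - exp (-x)) / x

lemma hasDerivAt_expNegMean {x : ℝ} (hx : x ≠ 0) :
    HasDerivAt expNegMean (((1 + x) * exp (-x) - 1) / x ^ 2) x := by
  have hnum : HasDerivAt (fun y => 1 - exp (-y)) (exp (-x)) x := by
    simpa using ((hasDerivAt_neg x).exp).const_sub 1
  exact (hnum.div (hasDerivAt_id' x) hx).congr_deriv (by ring)

lemma one_sub_sq_div_two_lt_add_one_mul_exp_neg {x : ℝ} (hx : 0 < x) :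
    1 - x ^ 2 / 2 < (1 + x) * exp (-x) := by
  let f : ℝ → ℝ := fun y => (1 + y) * exp (-y) + y ^ 2 / 2
  have hf : ∀ y, HasDerivAt f (y * (1 - exp (-y))) y := fun y => by
    have hexp : HasDerivAt (fun y => exp (-y)) (-exp (-y)) y := by
      simpa using (hasDerivAt_neg y).exp
    exact ((((hasDerivAt_id' y).const_add 1).mul hexp).add
      ((hasDerivAt_pow 2 y).div_const 2)).congr_deriv (by ring)
  have hmono : StrictMonoOn f (Ici 0) := by
    refine strictMonoOn_of_hasDerivWithinAt_pos (convex_Ici 0)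
      (fun y _ => (hf y).continuousAt.continuousWithinAt)
      (fun y _ => (hf y).hasDerivWithinAt) fun y hy => ?_
    rw [interior_Ici] at hy
    have hexp : exp (-y) < 1 := exp_lt_one_iff.mpr (neg_neg_of_pos hy)
    exact mul_pos hy (sub_pos.mpr hexp)
  have := hmono self_mem_Ici hx.le hx
  simp only [f, neg_zero, exp_zero] at this
  linarith

lemma expNegMean_strictAntiOn : StrictAntiOn expNegMean (Ioi 0) := by
  refine strictAntiOn_of_hasDerivWithinAt_neg (convex_Ioi 0)
    (fun x hx => (hasDerivAt_expNegMean (ne_of_gt hx)).continuousAt.continuousWithinAt)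
    (fun x hx => (hasDerivAt_expNegMean (ne_of_gt (interior_subset hx))).hasDerivWithinAt)
    fun x hx => ?_
  rw [interior_Ioi] at hx
  have hx : 0 < x := hx
  have h : (1 + x) * exp (-x) < 1 := by
    rw [← lt_div_iff₀ (exp_pos _), exp_neg, div_inv_eq_mul, one_mul, add_comm]
    exact add_one_lt_exp hx.ne'
  exact div_neg_of_neg_of_pos (sub_neg.mpr h) (by positivity)

lemma expNegMean_add_half_strictMonoOn :
    StrictMonoOn (fun x => expNegMean x + x / 2) (Ioi 0) := by
  have hderiv : ∀ {x : ℝ}, x ≠ 0 → HasDerivAt (fun x => expNegMean x + x / 2)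
      (((1 + x) * exp (-x) - 1) / x ^ 2 + 1 / 2) x := fun hx =>
    (hasDerivAt_expNegMean hx).add ((hasDerivAt_id _).div_const 2)
  refine strictMonoOn_of_hasDerivWithinAt_pos (convex_Ioi 0)
    (fun x hx => (hderiv (ne_of_gt hx)).continuousAt.continuousWithinAt)
    (fun x hx => (hderiv (ne_of_gt (interior_subset hx))).hasDerivWithinAt)
    fun x hx => ?_
  rw [interior_Ioi] at hx
  have hx : 0 < x := hx
  have h := one_sub_sq_div_two_lt_add_one_mul_exp_neg hx
  rw [div_add' _ _ _ (by positivity)]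
  exact div_pos (by linarith) (by positivity)

lemma typeII_eta_eq_expNegMean_slope {lam Vo V : ℝ} (hlam : lam ≠ 0) (hVo : Vo ≠ 0)
    (hV : V ≠ 0) (hVVo : V - Vo ≠ 0) :
    (Vo * exp (-lam * V) - V * exp (-lam * Vo) + V - Vo) / (lam ^ 2 * (V - Vo) * V * Vo) =
      (expNegMean (lam * Vo) - expNegMean (lam * V)) / (lam * V - lam * Vo) := by
  unfold expNegMean
  rw [← mul_sub, neg_mul, neg_mul]
  field_simp
  ring

/-- The joint retention probability `2 η(V)` of two transceiver pairs in the
Type II dual-zone hard-core process lies strictly between 0 and 1. -/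
theorem typeII_two_eta_prob (lam Vo V : ℝ)
    (hlam : 0 < lam) (hVo : 0 < Vo) (hV : Vo < V) :
    0 < 2 * ((Vo * exp (-lam * V) - V * exp (-lam * Vo) + V - Vo) /
        (lam ^ 2 * (V - Vo) * V * Vo)) ∧
      2 * ((Vo * exp (-lam * V) - V * exp (-lam * Vo) + V - Vo) /
        (lam ^ 2 * (V - Vo) * V * Vo)) < 1 := by
  have ha : lam * Vo ∈ Ioi (0 : ℝ) := mul_pos hlam hVo
  have hb : lam * V ∈ Ioi (0 : ℝ) := mul_pos hlam (hVo.trans hV)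
  have hab : lam * Vo < lam * V := mul_lt_mul_of_pos_left hV hlam
  rw [typeII_eta_eq_expNegMean_slope hlam.ne' hVo.ne' (hVo.trans hV).ne' (sub_pos.mpr hV).ne']
  have hanti := expNegMean_strictAntiOn ha hb hab
  have hmono := expNegMean_add_half_strictMonoOn ha hb hab
  have hslope := sub_pos.mpr hab
  constructor
  · exact mul_pos two_pos (div_pos (sub_pos.mpr hanti) hslope)
  · rw [mul_div_assoc', div_lt_one hslope]
    linarith
end

section
/- For all real numbers λ > 0 and fixed V_o > 0, the function V ↦ η(V) := (V_o·exp(−λ·V) − V·exp(−λ·V_o) + V − V_o) / (λ²·(V − V_o)·V·V_o) is strictly decreasing on the interval (V_o, ∞). -/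
/-!
Writing `h u = (1 - exp (-u)) / u`, a direct computation gives
`η(V) = -(h (λ V) - h (λ V_o)) / (λ V - λ V_o)`, minus the slope of a secant of `h` through the
fixed point `λ V_o`. Since `h'' u = (2 - exp (-u) (u² + 2u + 2)) / u³ > 0`, the function `h` is strictly
convex on `(0, ∞)`, so its secant slopes increase and `η` decreases.
-/

open Real Set

lemma sq_add_two_mul_add_two_lt_two_mul_exp {u : ℝ} (hu : 0 < u) :
    u ^ 2 + 2 * u + 2 < 2 * exp u := by
  have h := sum_le_exp_of_nonneg hu.le 4
  simp only [Finset.sum_range_succ, Finset.sum_range_zero, Nat.factorial] at h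
  norm_num at h
  nlinarith [pow_pos hu 3]

lemma hasDerivAt_one_sub_exp_neg_div {u : ℝ} (hu : u ≠ 0) :
    HasDerivAt (fun u : ℝ => (1 - exp (-u)) / u) (((u + 1) * exp (-u) - 1) / u ^ 2) u := by
  refine ((((hasDerivAt_neg u).exp).const_sub 1).div (hasDerivAt_id' u) hu).congr_deriv ?_
  ring

lemma hasDerivAt_add_one_mul_exp_neg_sub_one_div_sq {u : ℝ} (hu : u ≠ 0) :
    HasDerivAt (fun u : ℝ => ((u + 1) * exp (-u) - 1) / u ^ 2)
      ((2 - exp (-u) * (u ^ 2 + 2 * u + 2)) / u ^ 3) u := by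
  refine (((((hasDerivAt_id' u).add_const 1).mul (hasDerivAt_neg u).exp).sub_const 1).div
    (hasDerivAt_pow 2 u) (pow_ne_zero 2 hu)).congr_deriv ?_
  simp only [Pi.mul_apply]
  field_simp
  ring

lemma strictConvexOn_one_sub_exp_neg_div :
    StrictConvexOn ℝ (Ioi 0) fun u : ℝ => (1 - exp (-u)) / u := by
  have hmono : StrictMonoOn (fun u : ℝ => ((u + 1) * exp (-u) - 1) / u ^ 2) (Ioi 0) := by
    refine strictMonoOn_of_deriv_pos (convex_Ioi 0) ?_ fun u hu => ?_
    · exact ContinuousOn.div (by fun_prop) (by fun_prop) fun u hu => pow_ne_zero 2 (ne_of_gt hu)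
    rw [interior_Ioi] at hu
    rw [(hasDerivAt_add_one_mul_exp_neg_sub_one_div_sq (ne_of_gt hu)).deriv]
    have hnum : exp (-u) * (u ^ 2 + 2 * u + 2) < 2 :=
      calc exp (-u) * (u ^ 2 + 2 * u + 2) < exp (-u) * (2 * exp u) :=
            mul_lt_mul_of_pos_left (sq_add_two_mul_add_two_lt_two_mul_exp hu) (exp_pos _)
        _ = 2 := by rw [mul_left_comm, ← exp_add, neg_add_cancel, exp_zero, mul_one]
    exact div_pos (sub_pos.mpr hnum) (pow_pos hu 3)
  refine StrictMonoOn.strictConvexOn_of_deriv (convex_Ioi 0) ?_ ?_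
  · exact ContinuousOn.div (by fun_prop) continuousOn_id fun u hu => ne_of_gt hu
  rw [interior_Ioi]
  intro u hu v hv huv
  rw [(hasDerivAt_one_sub_exp_neg_div (ne_of_gt hu)).deriv,
    (hasDerivAt_one_sub_exp_neg_div (ne_of_gt hv)).deriv]
  exact hmono hu hv huv

lemma typeII_eta_eq_neg_secant_slope {lam Vo V : ℝ} (hlam : lam ≠ 0) (hVo : Vo ≠ 0)
    (hV : V ≠ 0) (hVVo : V ≠ Vo) :
    (Vo * exp (-lam * V) - V * exp (-lam * Vo) + V - Vo) / (lam ^ 2 * (V - Vo) * V * Vo) =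
      -(((1 - exp (-(lam * V))) / (lam * V) - (1 - exp (-(lam * Vo))) / (lam * Vo)) /
        (lam * V - lam * Vo)) := by
  have hsub : V - Vo ≠ 0 := sub_ne_zero.mpr hVVo
  have hlsub : lam * V - lam * Vo ≠ 0 := by rw [← mul_sub]; exact mul_ne_zero hlam hsub
  simp only [neg_mul]
  field_simp
  ring

/-- For fixed `lam > 0` and `Vo > 0`, the joint retention probability factor
`η(V)` is strictly decreasing in the combined exclusion area `V` on `(Vo, ∞)`. -/
theorem typeII_eta_strictAnti (lam Vo : ℝ) (hlam : 0 < lam) (hVo : 0 < Vo) :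
    StrictAntiOn
      (fun V : ℝ =>
        (Vo * exp (-lam * V) - V * exp (-lam * Vo) + V - Vo) /
          (lam ^ 2 * (V - Vo) * V * Vo))
      (Ioi Vo) := by
  intro V₁ (hV₁ : Vo < V₁) V₂ (hV₂ : Vo < V₂) hV₁₂
  have hmem : ∀ V, 0 < V → lam * V ∈ Ioi 0 := fun V hV => mul_pos hlam hV
  simp only
  rw [typeII_eta_eq_neg_secant_slope hlam.ne' hVo.ne' (by linarith) hV₁.ne',
    typeII_eta_eq_neg_secant_slope hlam.ne' hVo.ne' (by linarith) hV₂.ne', neg_lt_neg_iff]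
  exact strictConvexOn_one_sub_exp_neg_div.secant_strict_mono (hmem Vo hVo)
    (hmem V₁ (by linarith)) (hmem V₂ (by linarith))
    (mul_lt_mul_of_pos_left hV₁ hlam).ne' (mul_lt_mul_of_pos_left hV₂ hlam).ne'
    (mul_lt_mul_of_pos_left hV₁₂ hlam)
end
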